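/- Embedded (n,n) quantum secret sharing identity on an n-GHZ tree (Proposition 11): let 𝒢 be a simple graph on a finite vertex set W ⊇ {1,…,n} (n ≥ 2) such that the neighbourhood of vertex 1 is exactly {2,…,n} and there are no edges among 2,…,n; let Ext := W ∖ {1,…,n} and let 𝒩 be the induced subgraph of 𝒢 on Ext. Let ℓ^1 be the label with 1 on vertex 1 and 0 elsewhere. Then for all α, β ∈ ℂ, up to the canonical reordering of tensor factors: α|𝒢_{(0,…,0)}⟩ + β|𝒢_{ℓ^1}⟩ = 2^{−(n−1)/2} ∑_{m ∈ {0,1}^{n−1}} |m⟩_{2,…,n} ⊗ |𝒩_{f(m)}⟩_{Ext} ⊗ Z^{m_2⊕⋯⊕m_n}(α|+⟩ + β|−⟩)_1, where f(m) is the label string on Ext given by f(m)_w := ⊕_{j∈{2,…,n}, j adjacent to w} m_j, and |±⟩ := (|0⟩±|1⟩)/√2. Hence if players 2,…,n measure their qubits in the Z basis with outcomes m, the qubit of player 1 is left in the state Z^{m_2⊕⋯⊕m_n}(α|+⟩+β|−⟩), independently of the attached vertices. -/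

import Mathlib

noncomputable section

open scoped ComplexConjugate

/-- The Hilbert space of qubits indexed by `V`, as functions from bit strings to `ℂ`. -/
abbrev QState (V : Type) : Type := (V → Fin 2) → ℂ

/-- The diagonal operator with diagonal entries `d`. -/
def diagOp {V : Type} (d : (V → Fin 2) → ℂ) : QState V →ₗ[ℂ] QState V where
  toFun f := fun x => d x * f x
  map_add' f g := by funext x; simp [mul_add]
  map_smul' c f := by funext x; simp [smul_eq_mul]; ring

/-- The Pauli `Z` operator on qubit `i`. -/
def Zop {V : Type} (i : V) : QState V →ₗ[ℂ] QState V :=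
  diagOp fun x => (-1 : ℂ) ^ (x i : ℕ)

/-- The Pauli `X` operator on qubit `i` (bit flip). -/
def Xop {V : Type} [DecidableEq V] (i : V) : QState V →ₗ[ℂ] QState V where
  toFun f := fun x => f (Function.update x i (x i + 1))
  map_add' f g := rfl
  map_smul' c f := rfl

/-- The phase gate `S` on qubit `i`, sending `|x⟩` to `(-i)^(x i) |x⟩`. -/
def Sop {V : Type} (i : V) : QState V →ₗ[ℂ] QState V :=
  diagOp fun x => (-Complex.I) ^ (x i : ℕ)

/-- The Pauli `Y` operator on qubit `i`, `Y = i·X·Z`. -/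
def Yop {V : Type} [DecidableEq V] (i : V) : QState V →ₗ[ℂ] QState V :=
  Complex.I • (Xop i ∘ₗ Zop i)

/-- `qVal G x` is the number of edges of `G` both of whose endpoints carry bit 1 in `x`. -/
def qVal {V : Type} (G : SimpleGraph V) (x : V → Fin 2) : ℕ :=
  Nat.card {e : Sym2 V // e ∈ G.edgeSet ∧ ∀ v ∈ e, x v = 1}

/-- The graph state `|G⟩`, with amplitudes `2^{-n/2} (-1)^{q_G(x)}`. -/
def graphState {V : Type} [Fintype V] (G : SimpleGraph V) : QState V :=
  fun x => (((Real.sqrt 2)⁻¹ ^ Fintype.card V : ℝ) : ℂ) * (-1 : ℂ) ^ qVal G x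

/-- The labeled/encoded graph state `|𝒢_ℓ⟩ = (∏_i Z_i^{ℓ_i}) (∏_{j ∈ Vsq} S_j) |G⟩`,
with square-vertex set `Vsq`. -/
def encSq {V : Type} [Fintype V] (G : SimpleGraph V) (Vsq : Set V) (ℓ : V → Fin 2) : QState V :=
  fun x => (-1 : ℂ) ^ Nat.card {i : V // ℓ i = 1 ∧ x i = 1}
    * (-Complex.I) ^ Nat.card {j : V // j ∈ Vsq ∧ x j = 1}
    * graphState G x

/-- The encoded graph state `|G_ℓ⟩` (no square vertices). -/
def encG {V : Type} [Fintype V] (G : SimpleGraph V) (ℓ : V → Fin 2) : QState V :=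
  encSq G ∅ ℓ

open Classical in
/-- The stabilizer operator of vertex `i`: `X_i ∏_{j ∈ N_i} Z_j` for circular vertices,
`Y_i ∏_{j ∈ N_i} Z_j` for square vertices (`i ∈ Vsq`). -/
def Kop {V : Type} [DecidableEq V] (G : SimpleGraph V) (Vsq : Set V) (i : V) :
    QState V →ₗ[ℂ] QState V :=
  (if i ∈ Vsq then Yop i else Xop i) ∘ₗ
    diagOp fun x => (-1 : ℂ) ^ Nat.card {j : V // G.Adj i j ∧ x j = 1}

/-- Merge a bit string on `P` with a bit string on the complement of `P`. -/
def mergeBits {V : Type} [DecidableEq V] (P : Finset V) (a : {i // i ∈ P} → Fin 2)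
    (c : {i // i ∉ P} → Fin 2) : V → Fin 2 :=
  fun i => if h : i ∈ P then a ⟨i, h⟩ else c ⟨i, h⟩

/-- The reduced density matrix of the pure state `ψ` on the qubits in `P`:
`(a, b) ↦ ∑_c ⟨a⊔c|ψ⟩⟨ψ|b⊔c⟩`. -/
def red {V : Type} [Fintype V] [DecidableEq V] (P : Finset V) (ψ : QState V) :
    ({i // i ∈ P} → Fin 2) → ({i // i ∈ P} → Fin 2) → ℂ :=
  fun a b => ∑ c : {i // i ∉ P} → Fin 2, ψ (mergeBits P a c) * conj (ψ (mergeBits P b c))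

/-- The computational basis vector `|y⟩`. -/
def basisVec {V : Type} [Fintype V] [DecidableEq V] (y : V → Fin 2) : QState V :=
  fun x => if x = y then 1 else 0

/-- The matrix entry `⟨x|A|y⟩` of an operator. -/
def opEntry {V : Type} [Fintype V] [DecidableEq V] (A : QState V →ₗ[ℂ] QState V)
    (x y : V → Fin 2) : ℂ := A (basisVec y) x

/-- `A` acts trivially outside `P`: it equals `M ⊗ Id` for some operator `M` on the
qubits in `P`. -/
def trivialOutside {V : Type} [Fintype V] [DecidableEq V] (P : Finset V)
    (A : QState V →ₗ[ℂ] QState V) : Prop :=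
  ∃ M : ({i // i ∈ P} → Fin 2) → ({i // i ∈ P} → Fin 2) → ℂ,
    ∀ a b c c', opEntry A (mergeBits P a c) (mergeBits P b c') = if c = c' then M a b else 0

/-- The product `∏_{i ∈ T} K_i` of (commuting) operators, taken in sorted order. -/
def prodOps {V : Type} [LinearOrder V] (T : Finset V)
    (K : V → QState V →ₗ[ℂ] QState V) : QState V →ₗ[ℂ] QState V :=
  (T.sort (· ≤ ·)).foldr (fun i acc => K i ∘ₗ acc) LinearMap.id


/-- Components of `|+⟩ = (|0⟩+|1⟩)/√2`. -/
def plusC (_ : Fin 2) : ℂ := (((Real.sqrt 2)⁻¹ : ℝ) : ℂ)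

/-- Components of `|−⟩ = (|0⟩−|1⟩)/√2`. -/
def minusC (z : Fin 2) : ℂ := (((Real.sqrt 2)⁻¹ : ℝ) : ℂ) * (-1 : ℂ) ^ (z : ℕ)

/-!
Both sides are compared amplitude by amplitude. Since `Z` on the centre `pl 0` contributes
`(-1)^{x (pl 0)}`, the left side is `2^{-|V|/2} (-1)^{q_G(x)} (α + β (-1)^{x (pl 0)})`, so
everything reduces to the parity of `q_G(x)`. Split the edges of `G` inside the support of `x`
according to how many of their endpoints are players. As the other players are pairwise
non-adjacent, player–player edges are exactly the edges at the centre, giving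
`x (pl 0) · #{j ≠ 0 | x (pl j) = 1}`; external–external edges give `q_𝒩`; and as the centre has
no external neighbour, player–external edges, grouped by their external endpoint `w`, give
`∑_w x_w · #{j ≠ 0 | pl j ∼ w, x (pl j) = 1}`, whose parity is the number of `w` in the
support of `x` with `f(m)_w = 1`, i.e. the sign contributed by the label `f(m)` of `|𝒩_{f(m)}⟩`.
-/

open Finset

theorem neg_one_pow_eq_of_natCast_zmod_two_eq {R : Type*} [Monoid R] [HasDistribNeg R]
    {a b : ℕ} (h : (a : ZMod 2) = b) : (-1 : R) ^ a = (-1) ^ b :=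
  neg_one_pow_congr <| by
    rw [← ZMod.natCast_eq_zero_iff_even, ← ZMod.natCast_eq_zero_iff_even, h]

theorem ZMod.sum_eq_card_filter_eq_one_of_two {ι : Type*} (s : Finset ι) (f : ι → ZMod 2) :
    ∑ i ∈ s, f i = #{i ∈ s | f i = 1} := by
  rw [card_filter, Nat.cast_sum]
  refine sum_congr rfl fun i _ => ?_
  generalize f i = a
  fin_cases a <;> rfl

theorem card_filter_eq_natCard_of_injective {ι V : Type*} [Fintype ι] [Fintype V]
    [DecidableEq V] {f : ι → V} (hf : Function.Injective f) {P : V → Prop} [DecidablePred P]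
    {Q : ι → Prop} (h : ∀ v, P v ↔ ∃ i, Q i ∧ f i = v) : #{v | P v} = Nat.card {i // Q i} := by
  classical
  rw [Nat.card_eq_fintype_card, Fintype.card_subtype, ← card_image_of_injective _ hf]
  congr 1
  ext v
  simp [h]

theorem card_eq_natCard_setOf_forall_ne_add {ι V : Type*} [Fintype ι] [Fintype V] [DecidableEq V]
    {f : ι → V} (hf : Function.Injective f) :
    Fintype.card V = Nat.card {v | ∀ i, v ≠ f i} + Fintype.card ι := by
  have range_card : #{v : V | ¬∀ i, v ≠ f i} = Fintype.card ι := by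
    rw [card_filter_eq_natCard_of_injective hf (Q := fun _ => True) (by simp [eq_comm])]
    simp
  rw [← card_univ, ← card_filter_add_card_filter_not (s := univ) (fun v => ∀ i, v ≠ f i),
    range_card, Nat.card_eq_fintype_card, Fintype.card_subtype]
  rfl

theorem natCard_subtype_coe_eq_card_filter {V : Type*} [Fintype V] (s : Set V)
    [DecidablePred (· ∈ s)] (P : V → Prop) [DecidablePred P] :
    Nat.card {v : s // P v} = #{v | v ∈ s ∧ P v} := by
  rw [Nat.card_congr (Equiv.subtypeSubtypeEquivSubtypeInter (· ∈ s) P), Nat.card_eq_fintype_card,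
    Fintype.card_subtype]

section EdgesInSupport

variable {V : Type} [Fintype V] [DecidableEq V]

theorem Finset.card_sym2_eq_card_filter_add_card_filter_add_card_crossing
    (F : Finset (Sym2 V)) (p : V → Prop) [DecidablePred p] :
    #F = #{e ∈ F | ∀ v ∈ e, ¬p v} + #{e ∈ F | ∀ v ∈ e, p v} +
      #{q : V × V | ¬p q.1 ∧ p q.2 ∧ s(q.1, q.2) ∈ F} := by
  have crossing : #{q : V × V | ¬p q.1 ∧ p q.2 ∧ s(q.1, q.2) ∈ F} =
      #{e ∈ F | ¬(∀ v ∈ e, ¬p v) ∧ ¬∀ v ∈ e, p v} := by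
    apply card_bij (fun q _ => s(q.1, q.2))
    · rintro ⟨u, w⟩ h
      simp only [mem_filter, mem_univ, true_and] at h ⊢
      exact ⟨h.2.2, fun h' => h' w (Sym2.mem_mk_right u w) h.2.1,
        fun h' => h.1 (h' u (Sym2.mem_mk_left u w))⟩
    · rintro ⟨u, w⟩ h ⟨u', w'⟩ h' heq
      simp only [mem_filter, mem_univ, true_and] at h h'
      rcases Sym2.eq_iff.mp heq with ⟨rfl, rfl⟩ | ⟨rfl, rfl⟩
      · rfl
      · exact absurd h.2.1 h'.1
    · intro e he
      induction e using Sym2.ind with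
      | _ u w =>
        simp only [mem_filter, Sym2.mem_iff, forall_eq_or_imp, forall_eq, not_and_or,
          not_not] at he
        simp only [mem_filter, mem_univ, true_and, Prod.exists]
        rcases he with ⟨hF, hu | hw, hu' | hw'⟩
        · exact absurd hu hu'
        · exact ⟨w, u, ⟨hw', hu, Sym2.eq_swap ▸ hF⟩, Sym2.eq_swap⟩
        · exact ⟨u, w, ⟨hu', hw, hF⟩, rfl⟩
        · exact absurd hw hw'
  have inside_not_outside : ∀ e : Sym2 V, (∀ v ∈ e, p v) → ¬∀ v ∈ e, ¬p v := fun e h h' =>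
    h' _ (Sym2.out_fst_mem e) (h _ (Sym2.out_fst_mem e))
  rw [crossing, ← card_filter_add_card_filter_not (s := F) (fun e => ∀ v ∈ e, ¬p v),
    ← card_filter_add_card_filter_not (s := {e ∈ F | ¬∀ v ∈ e, ¬p v}) (fun e => ∀ v ∈ e, p v),
    filter_filter, filter_filter, add_assoc]
  congr 3
  exact filter_congr fun e _ => ⟨fun h => h.2, fun h => ⟨inside_not_outside e h, h⟩⟩

variable (G : SimpleGraph V) [DecidableRel G.Adj]

def edgesInSupport (x : V → Fin 2) : Finset (Sym2 V) :=
  {e ∈ G.edgeFinset | ∀ v ∈ e, x v = 1}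

@[simp]
theorem mk_mem_edgesInSupport {x : V → Fin 2} {u w : V} :
    s(u, w) ∈ edgesInSupport G x ↔ G.Adj u w ∧ x u = 1 ∧ x w = 1 := by
  simp [edgesInSupport]

theorem qVal_eq_card_edgesInSupport (x : V → Fin 2) : qVal G x = #(edgesInSupport G x) := by
  rw [qVal, Nat.card_eq_fintype_card, Fintype.card_subtype, edgesInSupport]
  congr 1
  ext e
  simp

theorem qVal_induce (s : Set V) [DecidablePred (· ∈ s)] (x : V → Fin 2) :
    qVal (G.induce s) (fun w => x w) = #{e ∈ edgesInSupport G x | ∀ v ∈ e, v ∈ s} := by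
  rw [qVal, Nat.card_eq_fintype_card, Fintype.card_subtype]
  apply card_bij (fun e _ => Sym2.map Subtype.val e)
  · intro e he
    induction e using Sym2.ind with
    | _ u w => simp_all
  · exact fun e _ e' _ h => Sym2.map.injective Subtype.val_injective h
  · intro e he
    induction e using Sym2.ind with
    | _ u w =>
      simp only [mem_filter, mk_mem_edgesInSupport, Sym2.mem_iff, forall_eq_or_imp,
        forall_eq] at he
      obtain ⟨⟨hadj, hu, hw⟩, hus, hws⟩ := he
      refine ⟨s(⟨u, hus⟩, ⟨w, hws⟩), mem_filter.mpr ⟨mem_univ _, hadj, fun v hv => ?_⟩, rfl⟩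
      rcases Sym2.mem_iff.mp hv with rfl | rfl
      exacts [hu, hw]

theorem card_filter_mem_edgesInSupport (x : V → Fin 2) (c : V) :
    #{e ∈ edgesInSupport G x | c ∈ e} = (x c : ℕ) * #{w | G.Adj c w ∧ x w = 1} := by
  obtain hc | hc : x c = 0 ∨ x c = 1 := by omega
  · rw [hc, Fin.val_zero, zero_mul, card_eq_zero, filter_eq_empty_iff]
    intro e he hce
    have := (mem_filter.mp he).2 c hce
    simp [hc] at this
  · rw [hc, Fin.val_one, one_mul]
    symm
    apply card_bij (fun w _ => s(c, w))
    · intro w hw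
      simp_all
    · intro w _ w' _ h
      exact Sym2.congr_right.mp h
    · intro e he
      induction e using Sym2.ind with
      | _ u w =>
        simp only [mem_filter, mk_mem_edgesInSupport, Sym2.mem_iff] at he
        obtain ⟨⟨hadj, hu, hw⟩, rfl | rfl⟩ := he
        · exact ⟨w, by simp [hadj, hw], rfl⟩
        · exact ⟨u, by simp [hadj.symm, hu], Sym2.eq_swap⟩

theorem card_crossing_edgesInSupport_eq_sum (x : V → Fin 2) (p : V → Prop) [DecidablePred p] :
    #{q : V × V | ¬p q.1 ∧ p q.2 ∧ s(q.1, q.2) ∈ edgesInSupport G x} =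
      ∑ w with p w ∧ x w = 1, #{u | ¬p u ∧ G.Adj u w ∧ x u = 1} := by
  rw [card_filter, Fintype.sum_prod_type_right, sum_filter]
  refine sum_congr rfl fun w _ => ?_
  split_ifs with hw
  · rw [card_filter]
    exact sum_congr rfl fun u _ => if_congr (by simp [hw]) rfl rfl
  · exact sum_eq_zero fun u _ => if_neg (by simp only [mk_mem_edgesInSupport]; tauto)

end EdgesInSupport

section StarOfPlayers

variable {V ι : Type} [Fintype V] [DecidableEq V] [Fintype ι] {G : SimpleGraph V}
  [DecidableRel G.Adj] {pl : ι → V} {c : ι}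

theorem filter_players_edgesInSupport_eq_filter_mem_center
    (hnb : ∀ w : V, G.Adj (pl c) w ↔ ∃ j, j ≠ c ∧ w = pl j)
    (hnoedge : ∀ j k, j ≠ c → k ≠ c → ¬G.Adj (pl j) (pl k)) (x : V → Fin 2) :
    {e ∈ edgesInSupport G x | ∀ v ∈ e, v ∉ {w | ∀ j, w ≠ pl j}} =
      {e ∈ edgesInSupport G x | pl c ∈ e} := by
  refine filter_congr fun e he => ?_
  induction e using Sym2.ind with
  | _ u w =>
    have hadj := ((mk_mem_edgesInSupport G).mp he).1
    simp only [Sym2.mem_iff, forall_eq_or_imp, forall_eq, Set.mem_ofPred_eq, not_forall,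
      not_not]
    constructor
    · rintro ⟨⟨a, rfl⟩, ⟨b, rfl⟩⟩
      by_contra! h
      exact hnoedge a b (fun ha => h.1 (ha ▸ rfl)) (fun hb => h.2 (hb ▸ rfl)) hadj
    · rintro (rfl | rfl)
      · obtain ⟨j, -, rfl⟩ := (hnb w).mp hadj
        exact ⟨⟨c, rfl⟩, ⟨j, rfl⟩⟩
      · obtain ⟨j, -, rfl⟩ := (hnb u).mp hadj.symm
        exact ⟨⟨j, rfl⟩, ⟨c, rfl⟩⟩

theorem card_adj_center (hinj : Function.Injective pl)
    (hnb : ∀ w : V, G.Adj (pl c) w ↔ ∃ j, j ≠ c ∧ w = pl j) (x : V → Fin 2) :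
    #{w | G.Adj (pl c) w ∧ x w = 1} = Nat.card {j // j ≠ c ∧ x (pl j) = 1} :=
  card_filter_eq_natCard_of_injective hinj fun w => by
    rw [hnb]
    constructor
    · rintro ⟨⟨j, hj, rfl⟩, hx⟩
      exact ⟨j, ⟨hj, hx⟩, rfl⟩
    · rintro ⟨j, ⟨hj, hx⟩, rfl⟩
      exact ⟨⟨j, hj, rfl⟩, hx⟩

theorem card_players_adj_of_forall_ne (hinj : Function.Injective pl)
    (hnb : ∀ w : V, G.Adj (pl c) w ↔ ∃ j, j ≠ c ∧ w = pl j) (x : V → Fin 2)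
    {w : V} (hw : w ∈ {w | ∀ j, w ≠ pl j}) :
    #{u | u ∉ {w | ∀ j, w ≠ pl j} ∧ G.Adj u w ∧ x u = 1} =
      Nat.card {j // j ≠ c ∧ G.Adj (pl j) w ∧ x (pl j) = 1} :=
  card_filter_eq_natCard_of_injective hinj fun u => by
    simp only [Set.mem_ofPred_eq, not_forall, not_not]
    constructor
    · rintro ⟨⟨j, rfl⟩, hadj, hx⟩
      refine ⟨j, ⟨fun hj => ?_, hadj, hx⟩, rfl⟩
      obtain ⟨k, -, rfl⟩ := (hnb w).mp (hj ▸ hadj)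
      exact hw k rfl
    · rintro ⟨j, ⟨-, hadj, hx⟩, rfl⟩
      exact ⟨⟨j, rfl⟩, hadj, hx⟩

open Fin.NatCast in
theorem qVal_cast_zmod_two_eq (hinj : Function.Injective pl)
    (hnb : ∀ w : V, G.Adj (pl c) w ↔ ∃ j, j ≠ c ∧ w = pl j)
    (hnoedge : ∀ j k, j ≠ c → k ≠ c → ¬G.Adj (pl j) (pl k)) (x : V → Fin 2) :
    (qVal G x : ZMod 2) =
      (x (pl c) : ℕ) * Nat.card {j // j ≠ c ∧ x (pl j) = 1} +
      qVal (G.induce {w | ∀ j, w ≠ pl j}) (fun w => x w.1) +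
      Nat.card {w : {w | ∀ j, w ≠ pl j} //
        ((Nat.card {j // j ≠ c ∧ G.Adj (pl j) w.1 ∧ x (pl j) = 1} : ℕ) : Fin 2) = 1 ∧ x w = 1} := by
  rw [qVal_eq_card_edgesInSupport,
    card_sym2_eq_card_filter_add_card_filter_add_card_crossing _ (· ∈ {w | ∀ j, w ≠ pl j}),
    filter_players_edgesInSupport_eq_filter_mem_center hnb hnoedge,
    card_filter_mem_edgesInSupport, card_adj_center hinj hnb, ← qVal_induce,
    card_crossing_edgesInSupport_eq_sum,
    sum_congr rfl fun w hw => card_players_adj_of_forall_ne hinj hnb x (mem_filter.mp hw).2.1]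
  push_cast
  rw [ZMod.sum_eq_card_filter_eq_one_of_two, filter_filter]
  simp only [and_assoc, and_comm (a := x _ = 1)]
  rw [← natCard_subtype_coe_eq_card_filter]
  -- the casts `ℕ → ZMod 2` and `ℕ → Fin 2` agree definitionally
  rfl

end StarOfPlayers

section EncodedGraphState

variable {V : Type} [Fintype V] (G : SimpleGraph V)

theorem encG_apply (ℓ x : V → Fin 2) :
    encG G ℓ x = (-1) ^ Nat.card {i // ℓ i = 1 ∧ x i = 1} * graphState G x := by
  simp [encG, encSq]

theorem encG_zero : encG G (fun _ => 0) = graphState G := by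
  ext x
  simp [encG_apply]

theorem encG_single_apply [DecidableEq V] (c : V) (x : V → Fin 2) :
    encG G (fun w => if w = c then 1 else 0) x = (-1) ^ (x c : ℕ) * graphState G x := by
  rw [encG_apply]
  congr 2
  obtain hc | hc : x c = 0 ∨ x c = 1 := by omega
  all_goals simp [hc, Fintype.card_subtype, filter_and, filter_eq']

end EncodedGraphState
open Fin.NatCast in
/-- embedded (n,n) quantum secret sharing identity on an n-GHZ tree,
n = m+2 ≥ 2 players: with `G`, `pl` as in the embedded setting (centre `pl 0`
adjacent exactly to the other players, no edges among them, arbitrary attachments),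
`Ext` the set of non-player vertices and `𝒩` the induced subgraph on `Ext`, the code
state satisfies, pointwise on the computational basis,
`α|𝒢_{0…0}⟩ + β|𝒢_{ℓ¹}⟩ = 2^{−(n−1)/2} ∑_m |m⟩_{players≠0} ⊗ |𝒩_{f(m)}⟩_{Ext} ⊗
Z^{⊕ m_j}(α|+⟩+β|−⟩)_{pl 0}`, where `f(m)_w = ⊕_{j≠0, pl j ∼ w} m_j`.  Hence
`Z`-measurements by the other players localize the secret on the centre,
independently of the attached vertices. -/
theorem embedded_nn_qq (m : ℕ) (V : Type) [Fintype V] [DecidableEq V]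
    (G : SimpleGraph V) [DecidableRel G.Adj] (pl : Fin (m + 2) → V)
    (hinj : Function.Injective pl)
    (hnb : ∀ w : V, G.Adj (pl 0) w ↔ ∃ j : Fin (m + 2), j ≠ 0 ∧ w = pl j)
    (hnoedge : ∀ j k : Fin (m + 2), j ≠ 0 → k ≠ 0 → ¬G.Adj (pl j) (pl k))
    (α β : ℂ) (x : V → Fin 2) :
    (α • encG G (fun _ => 0) + β • encG G fun w => if w = pl 0 then 1 else 0) x =
      (((Real.sqrt 2)⁻¹ ^ (m + 1) : ℝ) : ℂ) *
        encG (G.induce {w | ∀ j, w ≠ pl j})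
          (fun w => ((Nat.card
              {j : Fin (m + 2) // j ≠ 0 ∧ G.Adj (pl j) w.1 ∧ x (pl j) = 1} : ℕ) : Fin 2))
          (fun w => x w.1) *
        ((-1 : ℂ) ^ ((Nat.card {j : Fin (m + 2) // j ≠ 0 ∧ x (pl j) = 1} % 2) *
            (x (pl 0) : ℕ)) *
          (α * plusC (x (pl 0)) + β * minusC (x (pl 0)))) := by

  have sign : (-1 : ℂ) ^ qVal G x =
      (-1) ^ ((Nat.card {j : Fin (m + 2) // j ≠ 0 ∧ x (pl j) = 1} % 2) * (x (pl 0) : ℕ)) *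
      (-1) ^ qVal (G.induce {w | ∀ j, w ≠ pl j}) (fun w => x w.1) *
      (-1) ^ Nat.card {w : {w | ∀ j, w ≠ pl j} //
        ((Nat.card {j : Fin (m + 2) // j ≠ 0 ∧ G.Adj (pl j) w.1 ∧ x (pl j) = 1} : ℕ) : Fin 2) = 1
          ∧ x w = 1} := by
    rw [← pow_add, ← pow_add]
    apply neg_one_pow_eq_of_natCast_zmod_two_eq
    push_cast [ZMod.natCast_mod, qVal_cast_zmod_two_eq hinj hnb hnoedge x]
    ring
  rw [Pi.add_apply, Pi.smul_apply, Pi.smul_apply, smul_eq_mul, smul_eq_mul, encG_zero,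
    encG_single_apply, encG_apply, graphState, graphState, sign,
    card_eq_natCard_setOf_forall_ne_add hinj, Nat.card_eq_fintype_card, Fintype.card_fin]
  simp only [plusC, minusC]
  push_cast
  ring
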